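/- arXiv:1707.02241 — 10 statements merged into one kernel-verified Lean document; each statement's English description precedes it below -/
import Mathlib

section
/- Let C ⊆ F^n be an F-linear code, let B ⊆ F be a subfield such that F has degree t over B, and let 1 ≤ r ≤ n. Suppose that for every set I ⊆ {1,...,n} with |I| = r there exists a multiple-repair matrix M ∈ F^{n×rt} for I with bandwidth at most b. Then C admits an exact centralized repair scheme for r failures (over B) with bandwidth at most b. -/
/-- `C` admits an exact centralized repair scheme (over `B`) for `r` failures with
bandwidth at most `b`: for every set `I` of at most `r` failed nodes there are
numbers `bw j` and functions `g j : F → B^{bw j}` for the surviving nodes such that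
`∑_{j ∉ I} bw j ≤ b` and the symbols `(c_i)_{i ∈ I}` of any codeword `c ∈ C` are
determined by the values `(g j (c j))_{j ∉ I}`. -/
def HasRepairScheme (B : Type*) {F : Type*} [Field B] [Field F] [Algebra B F]
    {n : ℕ} (C : Set (Fin n → F)) (r b : ℕ) : Prop :=
  ∀ I : Finset (Fin n), I.card ≤ r →
    ∃ (bw : Fin n → ℕ) (g : (j : Fin n) → F → (Fin (bw j) → B)),
      (∑ j ∈ Iᶜ, bw j ≤ b) ∧
      ∀ c ∈ C, ∀ c' ∈ C,
        (∀ j ∈ Iᶜ, g j (c j) = g j (c' j)) → ∀ i ∈ I, c i = c' i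

/-- `M ∈ F^{n × m}` is a multiple-repair matrix for the failed set `I` with bandwidth `b`:
(1) every column of `M` lies in the dual code of `C`;
(2) `M[I,:] · x ≠ 0` for every nonzero `x ∈ B^m`;
(3) `∑_{j ∉ I} dim_B span_B {M j w : w} = b`. -/
def IsMultipleRepairMatrix (B : Type*) {F : Type*} [Field B] [Field F] [Algebra B F]
    {n m : ℕ} (C : Set (Fin n → F)) (I : Finset (Fin n))
    (M : Matrix (Fin n) (Fin m) F) (b : ℕ) : Prop :=
  (∀ ℓ : Fin m, ∀ c ∈ C, ∑ i, c i * M i ℓ = 0) ∧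
  (∀ x : Fin m → B, x ≠ 0 → ∃ i ∈ I, ∑ ℓ, M i ℓ * algebraMap B F (x ℓ) ≠ 0) ∧
  (∑ j ∈ Iᶜ, Module.finrank B (Submodule.span B (Set.range (M j))) = b)

/-!
Choose `I' ⊇ I` with `|I'| = r` and a multiple-repair matrix `M` for `I'`. Every surviving
node `j ∉ I'` sends the traces `tr(c_j · w)` for `w` running over a `B`-basis of the row span
`W_j = span_B {M j ℓ}`; nodes of `I' \ I` send nothing. These traces determine
`tr(c_j · M j ℓ)` for all `ℓ`, and since every column of `M` is a parity check,
`tr(∑_{i ∈ I'} c_i M i ℓ)` for all `ℓ`. The `rt` columns of `M[I',:]` are `B`-linearly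
independent in the `rt`-dimensional `B`-space `F^{I'}`, hence span it, so by nondegeneracy of
the trace form these values determine `(c_i)_{i ∈ I'}`.
-/

open Module Submodule

theorem Algebra.trace_mul_eq_of_basis {B F : Type*} [CommRing B] [CommRing F] [Algebra B F]
    {ι : Type*} {S : Submodule B F} (bS : Basis ι B S)
    {y y' : F} (h : ∀ k, Algebra.trace B F (y * bS k) = Algebra.trace B F (y' * bS k))
    {s : F} (hs : s ∈ S) : Algebra.trace B F (y * s) = Algebra.trace B F (y' * s) := by
  have : (Algebra.traceForm B F y).comp S.subtype = (Algebra.traceForm B F y').comp S.subtype :=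
    bS.ext fun k => by simpa using h k
  simpa using LinearMap.congr_fun this ⟨s, hs⟩

section Trace

variable {B F : Type*} [Field B] [Field F] [Algebra B F] [FiniteDimensional B F]
  [Algebra.IsSeparable B F] {ι κ : Type*} [Fintype ι]

theorem eq_zero_of_trace_dotProduct_eq_zero {d : ι → F}
    (h : ∀ z : ι → F, Algebra.trace B F (d ⬝ᵥ z) = 0) : d = 0 := by
  classical
  funext i
  refine (traceForm_nondegenerate B F).1 (d i) fun f => ?_
  simpa [dotProduct_single] using h (Pi.single i f)

theorem eq_zero_of_trace_dotProduct_eq_zero_of_span_eq_top {v : κ → ι → F}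
    (hv : span B (Set.range v) = ⊤) {d : ι → F}
    (h : ∀ ℓ, Algebra.trace B F (d ⬝ᵥ v ℓ) = 0) : d = 0 := by
  let L : (ι → F) →ₗ[B] B :=
    ∑ i, (Algebra.traceForm B F (d i)).comp (LinearMap.proj i)
  have hL : ∀ z, L z = Algebra.trace B F (d ⬝ᵥ z) := fun z => by
    simp [L, dotProduct, map_sum]
  have hL0 : L = 0 := LinearMap.ext_on_range hv fun ℓ => by simpa [hL] using h ℓ
  exact eq_zero_of_trace_dotProduct_eq_zero fun z => by rw [← hL, hL0, LinearMap.zero_apply]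

end Trace

section RepairMatrix

variable {B F : Type*} [Field B] [Field F] [Algebra B F] {n m : ℕ}

theorem IsMultipleRepairMatrix.linearIndependent_columns_restrict {C : Set (Fin n → F)}
    {I : Finset (Fin n)} {M : Matrix (Fin n) (Fin m) F} {b : ℕ}
    (hM : IsMultipleRepairMatrix B C I M b) :
    LinearIndependent B fun ℓ (i : I) => M i ℓ := by
  refine Fintype.linearIndependent_iff.2 fun x hx => ?_
  by_contra! hx0
  obtain ⟨i, hi, hne⟩ := hM.2.1 x (Function.ne_iff.2 hx0)
  refine hne ?_
  simpa [Algebra.smul_def, mul_comm] using congrFun hx ⟨i, hi⟩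

theorem IsMultipleRepairMatrix.eqOn_of_trace_eq [FiniteDimensional B F] [Algebra.IsSeparable B F]
    {C : Submodule F (Fin n → F)} {I : Finset (Fin n)} {M : Matrix (Fin n) (Fin m) F} {b : ℕ}
    (hM : IsMultipleRepairMatrix B (C : Set (Fin n → F)) I M b) (hm : m = I.card * finrank B F)
    {c c' : Fin n → F} (hc : c ∈ C) (hc' : c' ∈ C)
    (h : ∀ j ∉ I, ∀ ℓ, Algebra.trace B F (c j * M j ℓ) = Algebra.trace B F (c' j * M j ℓ)) :
    ∀ i ∈ I, c i = c' i := by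
  have hspan : span B (Set.range fun ℓ (i : I) => M i ℓ) = ⊤ :=
    hM.linearIndependent_columns_restrict.span_eq_top_of_card_eq_finrank'
      (by simp [hm, finrank_pi_fintype])
  have hparity : ∀ ℓ, ∑ i, (c - c') i * M i ℓ = 0 := fun ℓ => hM.1 ℓ _ (C.sub_mem hc hc')
  have htrace : ∀ ℓ, Algebra.trace B F ((fun i : I => (c - c') i) ⬝ᵥ fun i => M i ℓ) = 0 := by
    intro ℓ
    have hsplit := hparity ℓ
    rw [← Finset.sum_add_sum_compl I, ← eq_neg_iff_add_eq_zero] at hsplit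
    rw [dotProduct, Finset.sum_coe_sort I fun i => (c - c') i * M i ℓ, hsplit, map_neg,
      map_sum, neg_eq_zero]
    refine Finset.sum_eq_zero fun j hj => ?_
    rw [Pi.sub_apply, sub_mul, map_sub, h j (Finset.mem_compl.1 hj), sub_self]
  intro i hi
  have hd := eq_zero_of_trace_dotProduct_eq_zero_of_span_eq_top hspan htrace
  exact sub_eq_zero.1 (congrFun hd ⟨i, hi⟩)

end RepairMatrix

theorem exists_trace_repair_functions {B F : Type*} [Field B] [Field F] [Algebra B F]
    [FiniteDimensional B F] {n : ℕ} {C : Set (Fin n → F)} (I : Finset (Fin n))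
    (W : Fin n → Submodule B F)
    (hW : ∀ c ∈ C, ∀ c' ∈ C,
      (∀ j ∈ Iᶜ, ∀ w ∈ W j, Algebra.trace B F (c j * w) = Algebra.trace B F (c' j * w)) →
        ∀ i ∈ I, c i = c' i) :
    ∃ (bw : Fin n → ℕ) (g : (j : Fin n) → F → (Fin (bw j) → B)),
      ∑ j ∈ Iᶜ, bw j = ∑ j ∈ Iᶜ, finrank B (W j) ∧
      ∀ c ∈ C, ∀ c' ∈ C, (∀ j ∈ Iᶜ, g j (c j) = g j (c' j)) → ∀ i ∈ I, c i = c' i :=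
  ⟨fun j => finrank B (W j), fun j y k => Algebra.trace B F (y * finBasis B (W j) k), rfl,
    fun c hc c' hc' hg => hW c hc c' hc' fun j hj _ hw =>
      Algebra.trace_mul_eq_of_basis _ (congrFun (hg j hj)) hw⟩

theorem repair_scheme_of_multiple_repair_matrices_general
    {B F : Type*} [Field B] [Field F] [Fintype F] [Algebra B F]
    {n t r b : ℕ} (ht : Module.finrank B F = t)
    (hrn : r ≤ n)
    (C : Submodule F (Fin n → F))
    (hM : ∀ I : Finset (Fin n), I.card = r →
      ∃ (M : Matrix (Fin n) (Fin (r * t)) F) (b' : ℕ), b' ≤ b ∧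
        IsMultipleRepairMatrix B (C : Set (Fin n → F)) I M b') :
    HasRepairScheme B (C : Set (Fin n → F)) r b := by
  intro I hI
  obtain ⟨I', hII', hI'⟩ := Finset.exists_superset_card_eq hI (by simpa using hrn)
  obtain ⟨M, b', hb', hMI'⟩ := hM I' hI'
  let W : Fin n → Submodule B F := fun j => if j ∈ I' then ⊥ else span B (Set.range (M j))
  have hcompl : I'ᶜ ⊆ Iᶜ := Finset.compl_subset_compl.2 hII'
  obtain ⟨bw, g, hbw, hg⟩ := exists_trace_repair_functions I W fun c hc c' hc' htr i hi =>
    hMI'.eqOn_of_trace_eq (by rw [hI', ht]) hc hc'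
      (fun j hj ℓ => htr j (hcompl (Finset.mem_compl.2 hj)) _
        (by simpa [W, hj] using subset_span (Set.mem_range_self ℓ))) i (hII' hi)
  refine ⟨bw, g, ?_, hg⟩
  calc ∑ j ∈ Iᶜ, bw j = ∑ j ∈ I'ᶜ, finrank B (W j) := by
        rw [hbw, Finset.sum_subset hcompl fun j _ hj => by simp_all [W]]
    _ = b' := by
      rw [← hMI'.2.2]
      exact Finset.sum_congr rfl fun j hj =>
        congrArg (fun S : Submodule B F => finrank B S) (if_neg (Finset.mem_compl.1 hj))
    _ ≤ b := hb'

/-- If for every `I ⊆ [n]` with `|I| = r` there is a multiple-repair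
matrix `M ∈ F^{n × rt}` for `I` with bandwidth at most `b`, then the `F`-linear code
`C ⊆ F^n` admits an exact centralized repair scheme for `r` failures with bandwidth
at most `b`. Here `B ⊆ F` is a subfield and `F` has degree `t` over `B`. -/
theorem repair_scheme_of_multiple_repair_matrices
    {B F : Type*} [Field B] [Field F] [Fintype B] [Fintype F] [Algebra B F]
    {n t r b : ℕ} (ht : Module.finrank B F = t)
    (hr1 : 1 ≤ r) (hrn : r ≤ n)
    (C : Submodule F (Fin n → F))
    (hM : ∀ I : Finset (Fin n), I.card = r →
      ∃ (M : Matrix (Fin n) (Fin (r * t)) F) (b' : ℕ), b' ≤ b ∧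
        IsMultipleRepairMatrix B (C : Set (Fin n → F)) I M b') :
    HasRepairScheme B (C : Set (Fin n → F)) r b :=
  repair_scheme_of_multiple_repair_matrices_general ht hrn C hM
end

section
/- Let B ⊆ F be a subfield such that F has degree t over B, and let C ⊆ F^n be a Reed-Solomon code of dimension k (with n distinct evaluation points in F and 1 ≤ k < n ≤ |F|). Let 1 ≤ r ≤ n−k. Then C admits an exact centralized repair scheme for r failures (over B) with bandwidth at most min over integers r' with r ≤ r' ≤ n−k of (n−r')·(t − s(r')), where s(r') = ⌊log_{|B|}((n−k+r'−1)/(2r'−1))⌋ is the largest nonnegative integer s with |B|^s·(2r'−1) ≤ n−k+r'−1. -/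
/-- The Reed-Solomon code of dimension `k` with evaluation points `α 0, …, α (n-1)`. -/
def rsCode {F : Type*} [Field F] {n : ℕ} (k : ℕ) (α : Fin n → F) : Set (Fin n → F) :=
  {v | ∃ f : Polynomial F, f.degree < (k : ℕ) ∧ ∀ i, v i = f.eval (α i)}

open Polynomial Finset Module Lagrange

theorem Submodule.finrank_map_lt_of_mem_ker {K M N : Type*} [Field K] [AddCommGroup M] [Module K M]
    [AddCommGroup N] [Module K N] {V : Submodule K M} [FiniteDimensional K V] (f : M →ₗ[K] N)
    {v : M} (hvV : v ∈ V) (hv : f v = 0) (hv0 : v ≠ 0) :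
    finrank K (V.map f) < finrank K V :=
  lt_of_not_ge fun h => hv0 <|
    (Submodule.disjoint_def.mp (Submodule.disjoint_ker_of_finrank_le f h)) v hvV hv

section LinearizedPolynomial

variable {B F : Type*} [Field B] [Fintype B] [Field F] [Algebra B F]

theorem exists_ne_zero_finrank_map_frobenius_sub_le (V : Submodule B F) [FiniteDimensional B V] :
    ∃ d : F, d ≠ 0 ∧
      finrank B (V.map ((FiniteField.frobeniusAlgHom B F).toLinearMap - LinearMap.mulLeft B d))
        ≤ finrank B V - 1 := by
  rcases eq_or_ne V ⊥ with rfl | hV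
  · exact ⟨1, one_ne_zero, by simp⟩
  obtain ⟨v, hvV, hv0⟩ := Submodule.exists_mem_ne_zero_of_ne_bot hV
  refine ⟨v ^ (Fintype.card B - 1), pow_ne_zero _ hv0, Nat.le_pred_of_lt <|
    Submodule.finrank_map_lt_of_mem_ker _ hvV ?_ hv0⟩
  simp [← pow_succ, Nat.sub_add_cancel Fintype.card_pos]

theorem sum_cons_sub_mul_snoc_mul_pow {s : ℕ} (c : Fin (s + 1) → F) (d y : F) :
    ∑ m : Fin (s + 2), (Fin.cons (α := fun _ => F) 0 (fun m => c m ^ Fintype.card B) m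
        - d * Fin.snoc (α := fun _ => F) c 0 m) * y ^ Fintype.card B ^ (m : ℕ)
      = (∑ m, c m * y ^ Fintype.card B ^ (m : ℕ)) ^ Fintype.card B
        - d * ∑ m, c m * y ^ Fintype.card B ^ (m : ℕ) := by
  have hfrob : (∑ m, c m * y ^ Fintype.card B ^ (m : ℕ)) ^ Fintype.card B
      = ∑ m : Fin (s + 1), c m ^ Fintype.card B * y ^ Fintype.card B ^ (m + 1 : ℕ) := by
    rw [← FiniteField.frobeniusAlgHom_apply (K := B), map_sum]
    simp [mul_pow, ← pow_mul, pow_succ]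
  simp only [sub_mul, sum_sub_distrib, hfrob, mul_sum, mul_assoc]
  rw [Fin.sum_univ_succ, Fin.sum_univ_castSucc (fun m : Fin (s + 2) => d * _)]
  simp

theorem exists_linearized_range_le [FiniteDimensional B F] (s : ℕ) :
    ∃ (c : Fin (s + 1) → F) (V : Submodule B F), c 0 ≠ 0 ∧ finrank B V ≤ finrank B F - s ∧
      ∀ y, ∑ m, c m * y ^ Fintype.card B ^ (m : ℕ) ∈ V := by
  induction s with
  | zero => exact ⟨fun _ => 1, ⊤, one_ne_zero, by simp, fun _ => Submodule.mem_top⟩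
  | succ s ih =>
    obtain ⟨c, V, hc0, hV, hcV⟩ := ih
    obtain ⟨d, hd0, hdV⟩ := exists_ne_zero_finrank_map_frobenius_sub_le V
    set θ := (FiniteField.frobeniusAlgHom B F).toLinearMap - LinearMap.mulLeft B d
    refine ⟨fun m => Fin.cons (α := fun _ => F) 0 (fun m => c m ^ Fintype.card B) m
        - d * Fin.snoc (α := fun _ => F) c 0 m, V.map θ, by simpa using And.intro hd0 hc0,
      by omega, fun y => ?_⟩
    rw [sum_cons_sub_mul_snoc_mul_pow]
    exact Submodule.mem_map_of_mem (f := θ) (hcV y)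

end LinearizedPolynomial

section RepairPolynomial

variable {F : Type*} [Field F] (q : ℕ) {s : ℕ} (c : Fin (s + 1) → F) (γ : F) (U G : F[X])

noncomputable def repairPoly : F[X] :=
  ∑ m : Fin (s + 1), C (c m * γ ^ q ^ (m : ℕ)) * U ^ q ^ (m : ℕ) * G ^ (q ^ (m : ℕ) - 1)

variable {q c γ U G}

theorem eval_repairPoly (x : F) : (repairPoly q c γ U G).eval x
    = ∑ m : Fin (s + 1), c m * (γ * U.eval x) ^ q ^ (m : ℕ) * G.eval x ^ (q ^ (m : ℕ) - 1) := by
  simp [repairPoly, eval_finsetSum, mul_pow, mul_assoc]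

theorem eval_repairPoly_of_eval_ne_zero (hq : q ≠ 0) {x : F} (hG : G.eval x ≠ 0) :
    (repairPoly q c γ U G).eval x
      = (G.eval x)⁻¹ * ∑ m : Fin (s + 1), c m * (γ * U.eval x * G.eval x) ^ q ^ (m : ℕ) := by
  rw [eval_repairPoly, mul_sum]
  refine sum_congr rfl fun m _ => ?_
  obtain ⟨Q, hQ⟩ : ∃ Q, q ^ (m : ℕ) = Q + 1 :=
    Nat.exists_eq_add_one.mpr (pow_pos (Nat.pos_of_ne_zero hq) _)
  rw [hQ, Nat.add_sub_cancel, mul_pow _ (G.eval x), pow_succ (G.eval x)]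
  field_simp

theorem eval_repairPoly_of_eval_eq_zero_left (hq : q ≠ 0) {x : F} (hU : U.eval x = 0) :
    (repairPoly q c γ U G).eval x = 0 := by
  simp [eval_repairPoly, hU, hq]

theorem eval_repairPoly_of_eval_eq_zero_right (hq : 1 < q) {x : F} (hG : G.eval x = 0) :
    (repairPoly q c γ U G).eval x = c 0 * γ * U.eval x := by
  rw [eval_repairPoly, Fin.sum_univ_succ, sum_eq_zero fun m _ => ?_]
  · simp [mul_assoc]
  · rw [hG, zero_pow (Nat.sub_ne_zero_of_lt (Nat.one_lt_pow (by simp) hq)), mul_zero]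

theorem natDegree_repairPoly_le (hq : q ≠ 0) {a N : ℕ} (hU : U.natDegree ≤ a)
    (hG : G.natDegree ≤ a + 1) (hs : q ^ s * (2 * a + 1) ≤ N + a + 1) :
    (repairPoly q c γ U G).natDegree ≤ N := by
  refine natDegree_sum_le_of_forall_le _ _ fun m _ => ?_
  have hm : q ^ (m : ℕ) * (2 * a + 1) ≤ N + a + 1 :=
    le_trans (Nat.mul_le_mul_right _ (Nat.pow_le_pow_right (Nat.pos_of_ne_zero hq) m.is_le)) hs
  obtain ⟨Q, hQ⟩ : ∃ Q, q ^ (m : ℕ) = Q + 1 :=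
    Nat.exists_eq_add_one.mpr (pow_pos (Nat.pos_of_ne_zero hq) _)
  rw [hQ] at hm ⊢
  rw [Nat.add_sub_cancel]
  calc _ ≤ 0 + (Q + 1) * a + Q * (a + 1) := by
        refine (natDegree_mul_le).trans (add_le_add (natDegree_mul_le.trans
          (add_le_add (natDegree_C _).le (natDegree_pow_le.trans ?_))) (natDegree_pow_le.trans ?_))
        · exact Nat.mul_le_mul_left _ hU
        · exact Nat.mul_le_mul_left _ hG
    _ ≤ N := by nlinarith

theorem degree_repairPoly_nodal_mul_lt {ι : Type*} [DecidableEq ι] (hq : q ≠ 0) {v : ι → F}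
    {I : Finset ι} {i : ι} (hi : i ∈ I) {n k : ℕ} (hs : q ^ s * (2 * #I - 1) ≤ n - k + #I - 1)
    {f : F[X]} (hf : f.natDegree + 1 ≤ k) :
    (repairPoly q c γ (nodal (I.erase i) v) (nodal I v) * f).degree < ↑(n - 1) := by
  have hI : 1 ≤ #I := card_pos.mpr ⟨i, hi⟩
  have hIk : #I ≤ n - k := by
    have := (Nat.mul_le_mul_right (2 * #I - 1) (Nat.one_le_pow s q (by omega))).trans hs
    omega
  have hP : (repairPoly q c γ (nodal (I.erase i) v) (nodal I v)).natDegree ≤ n - k - 1 :=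
    natDegree_repairPoly_le (a := #I - 1) hq
      (by simp [natDegree_nodal, card_erase_of_mem hi]) (by simp [natDegree_nodal]; omega)
      (by rwa [show 2 * (#I - 1) + 1 = 2 * #I - 1 by omega,
        show n - k - 1 + (#I - 1) + 1 = n - k + #I - 1 by omega])
  exact degree_le_natDegree.trans_lt (Nat.cast_lt.mpr (natDegree_mul_le.trans_lt (by omega)))

end RepairPolynomial

theorem Lagrange.sum_nodalWeight_mul_eval_eq_zero {F ι : Type*} [Field F] [DecidableEq ι]
    {s : Finset ι} {v : ι → F} (hvs : Set.InjOn v s) {P : F[X]} (hP : P.degree < ↑(#s - 1)) :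
    ∑ i ∈ s, nodalWeight s v i * P.eval (v i) = 0 := by
  have hP' : P.degree < #s := hP.trans_le (by exact_mod_cast Nat.sub_le _ _)
  rw [← coeff_eq_zero_of_degree_lt hP, coeff_eq_sum hvs hP']
  simp [nodalWeight, div_eq_mul_inv, mul_comm, prod_inv_distrib]

theorem eval_eq_zero_of_trace_eq_zero {B F : Type*} [Field B] [Fintype B] [Field F] [Finite F]
    [Algebra B F] {n k : ℕ} {α : Fin n → F} (hα : Function.Injective α) {I : Finset (Fin n)}
    {i : Fin n} (hi : i ∈ I) {s : ℕ} {c : Fin (s + 1) → F} {V : Submodule B F} (hc0 : c 0 ≠ 0)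
    (hcV : ∀ y, ∑ m, c m * y ^ Fintype.card B ^ (m : ℕ) ∈ V)
    (hs : Fintype.card B ^ s * (2 * #I - 1) ≤ n - k + #I - 1) {f : F[X]} (hf : f.degree < k)
    (hdown : ∀ j ∉ I, ∀ w ∈ V, Algebra.trace B F
      (nodalWeight univ α j * (eval (α j) (nodal I α))⁻¹ * f.eval (α j) * w) = 0) :
    f.eval (α i) = 0 := by
  rcases eq_or_ne f 0 with rfl | hf0
  · exact eval_zero
  set q := Fintype.card B
  have hq : 1 < q := Fintype.one_lt_card
  have hfk : f.natDegree + 1 ≤ k := (natDegree_lt_iff_degree_lt hf0).mpr hf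
  set U := nodal (I.erase i) α
  set G := nodal I α
  have hUi : U.eval (α i) ≠ 0 := eval_nodal_not_at_node fun j hj => hα.ne (ne_of_mem_erase hj).symm
  have hPf (γ : F) : (repairPoly q c γ U G * f).degree < ↑(#(univ : Finset (Fin n)) - 1) := by
    rw [card_univ, Fintype.card_fin]
    exact degree_repairPoly_nodal_mul_lt (by omega) hi hs hfk
  suffices key : ∀ γ, Algebra.trace B F
      (nodalWeight univ α i * c 0 * U.eval (α i) * f.eval (α i) * γ) = 0 by
    have := (traceForm_nondegenerate B F).1 _ fun γ => by rw [Algebra.traceForm_apply]; exact key γ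
    simpa [nodalWeight_ne_zero hα.injOn (mem_univ i), hc0, hUi] using this
  intro γ
  have hdual := sum_nodalWeight_mul_eval_eq_zero hα.injOn (hPf γ)
  rw [← sum_add_sum_compl I, sum_eq_single_of_mem i hi fun j hj hji =>
      by rw [eval_mul, eval_repairPoly_of_eval_eq_zero_left (by omega)
        (eval_nodal_at_node (mem_erase.mpr ⟨hji, hj⟩)), zero_mul, mul_zero],
    eval_mul, eval_repairPoly_of_eval_eq_zero_right hq (eval_nodal_at_node hi)] at hdual
  have hrest : ∀ j ∈ Iᶜ, Algebra.trace B F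
      (nodalWeight univ α j * (repairPoly q c γ U G * f).eval (α j)) = 0 := fun j hj => by
    have hj : j ∉ I := mem_compl.mp hj
    rw [eval_mul, eval_repairPoly_of_eval_ne_zero (by omega)
      (eval_nodal_not_at_node fun l hl => hα.ne (ne_of_mem_of_not_mem hl hj).symm)]
    convert hdown j hj _ (hcV (γ * U.eval (α j) * G.eval (α j))) using 2
    ring
  have := congrArg (Algebra.trace B F) hdual
  rw [map_add, map_sum, sum_eq_zero hrest, add_zero, map_zero] at this
  convert this using 2
  ring

theorem HasRepairScheme.of_uniform_download {B F : Type*} [Field B] [Field F] [Algebra B F]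
    {n : ℕ} {C : Set (Fin n → F)} {r b : ℕ}
    (h : ∀ I : Finset (Fin n), #I ≤ r → ∃ (J : Finset (Fin n)) (d : ℕ) (φ : Fin n → F → Fin d → B),
      J ⊆ Iᶜ ∧ #J * d ≤ b ∧
        ∀ c ∈ C, ∀ c' ∈ C, (∀ j ∈ J, φ j (c j) = φ j (c' j)) → ∀ i ∈ I, c i = c' i) :
    HasRepairScheme B C r b := by
  classical
  intro I hI
  obtain ⟨J, d, φ, hJ, hb, hφ⟩ := h I hI
  have hbw (j : Fin n) : (if j ∈ J then d else 0) ≤ d := by split_ifs <;> omega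
  refine ⟨fun j => if j ∈ J then d else 0, fun j y l => φ j y (Fin.castLE (hbw j) l), ?_,
    fun c hc c' hc' hg => hφ c hc c' hc' fun j hj => funext fun l => ?_⟩
  · rwa [sum_ite_mem, inter_eq_right.mpr hJ, sum_const, smul_eq_mul]
  · exact congrFun (hg j (hJ hj)) (Fin.cast (if_pos hj).symm l)

theorem rsCode_hasRepairScheme {B F : Type*} [Field B] [Fintype B] [Field F] [Finite F]
    [Algebra B F] {n k r r' s : ℕ} {α : Fin n → F} (hα : Function.Injective α) (hrr' : r ≤ r')
    (hr'n : r' ≤ n) (hs : Fintype.card B ^ s * (2 * r' - 1) ≤ n - k + r' - 1) :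
    HasRepairScheme B (rsCode k α) r ((n - r') * (finrank B F - s)) := by
  classical
  obtain ⟨c, V, hc0, hV, hcV⟩ := exists_linearized_range_le (B := B) (F := F) s
  let bV := Module.finBasis B V
  refine HasRepairScheme.of_uniform_download fun I hI => ?_
  obtain ⟨I', hII', -, hI'⟩ :=
    exists_subsuperset_card_eq (subset_univ I) (hI.trans hrr') (by simpa using hr'n)
  let a (j : Fin n) : F := nodalWeight univ α j * (eval (α j) (nodal I' α))⁻¹
  refine ⟨I'ᶜ, finrank B V, fun j y l => Algebra.trace B F (a j * y * bV l),
    compl_subset_compl.mpr hII', ?_, ?_⟩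
  · rw [card_compl, Fintype.card_fin, hI']
    exact Nat.mul_le_mul_left _ hV
  rintro _ ⟨f, hf, hcf⟩ _ ⟨f', hf', hcf'⟩ hagree i hi
  rw [hcf, hcf', ← sub_eq_zero, ← eval_sub]
  refine eval_eq_zero_of_trace_eq_zero hα (hII' hi) hc0 hcV (hI' ▸ hs)
    ((degree_sub_le f f').trans_lt (max_lt hf hf')) fun j hj w hw => ?_
  have hφ := hagree j (mem_compl.mpr hj)
  have : (Algebra.traceForm B F (a j * (f - f').eval (α j))).domRestrict V = 0 :=
    bV.ext fun l => by
      simpa [Algebra.traceForm_apply, mul_sub, sub_mul, hcf, hcf', sub_eq_zero] using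
        congrFun hφ l
  simpa [Algebra.traceForm_apply] using LinearMap.congr_fun this ⟨w, hw⟩

theorem Nat.pow_log_div_mul_le (b : ℕ) {N D : ℕ} (hDN : D ≤ N) : b ^ Nat.log b (N / D) * D ≤ N := by
  rcases Nat.eq_zero_or_pos D with rfl | hD
  · simp
  calc b ^ Nat.log b (N / D) * D ≤ N / D * D :=
        Nat.mul_le_mul_right _ (Nat.pow_log_le_self b (Nat.div_pos hDN hD).ne')
    _ ≤ N := Nat.div_mul_le_self N D

theorem rs_repair_scheme_main_general
    {B F : Type*} [Field B] [Field F] [Fintype B] [Fintype F] [Algebra B F]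
    {n k t r : ℕ} (ht : Module.finrank B F = t)
    (α : Fin n → F) (hα : Function.Injective α)
    (hrnk : r ≤ n - k) :
    HasRepairScheme B (rsCode k α) r
      (((Finset.Icc r (n - k)).image (fun r' =>
          (n - r') * (t - Nat.log (Fintype.card B) ((n - k + r' - 1) / (2 * r' - 1))))).min'
        (Finset.Nonempty.image (Finset.nonempty_Icc.mpr hrnk) _)) := by
  refine forall_mem_image.mpr (fun r' hr' => ?_) _ (min'_mem _ _)
  obtain ⟨hrr', hr'nk⟩ := mem_Icc.mp hr'
  subst ht
  exact rsCode_hasRepairScheme hα hrr' (by omega) (Nat.pow_log_div_mul_le _ (by omega))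

/-- A Reed-Solomon code of dimension `k` and length `n` over `F`
(with `B ⊆ F` a subfield of degree `t`) admits, for any `1 ≤ r ≤ n - k`, an exact
centralized repair scheme for `r` failures with bandwidth at most
`min_{r ≤ r' ≤ n-k} (n - r') * (t - ⌊log_{|B|}((n-k+r'-1)/(2r'-1))⌋)`. -/
theorem rs_repair_scheme_main
    {B F : Type*} [Field B] [Field F] [Fintype B] [Fintype F] [Algebra B F]
    {n k t r : ℕ} (ht : Module.finrank B F = t)
    (α : Fin n → F) (hα : Function.Injective α)
    (hk : 1 ≤ k) (hkn : k < n) (hn : n ≤ Fintype.card F)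
    (hr1 : 1 ≤ r) (hrnk : r ≤ n - k) :
    HasRepairScheme B (rsCode k α) r
      (((Finset.Icc r (n - k)).image (fun r' =>
          (n - r') * (t - Nat.log (Fintype.card B) ((n - k + r' - 1) / (2 * r' - 1))))).min'
        (Finset.Nonempty.image (Finset.nonempty_Icc.mpr hrnk) _)) :=
  rs_repair_scheme_main_general ht α hα hrnk
end

section
/- Let n = |F| and let C ⊆ F^n be the full-length Reed-Solomon code of dimension k = n − n/|B| with evaluation points α_1,...,α_n enumerating F. Fix i ∈ {1,...,n}, a nonzero δ ∈ F, and a basis ζ_1,...,ζ_t of F over B. Define M ∈ F^{n×t} by M[j,w] = δ·tr_{F/B}(ζ_w·(α_j − α_i))/(α_j − α_i) for j ≠ i, and M[i,w] = δ·ζ_w. Then M is a repair matrix for index i with bandwidth n−1. -/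
/-- The field trace of `F` over a subfield `B` of index `t`, viewed with values in `F`:
`tr(x) = ∑_{m=0}^{t-1} x^(|B|^m)`. -/
def fieldTrace (B : Type*) {F : Type*} [Field B] [Field F] [Fintype B] [Algebra B F]
    (t : ℕ) (x : F) : F :=
  ∑ m ∈ Finset.range t, x ^ (Fintype.card B) ^ m

open Polynomial Finset

theorem FiniteField.sum_eval_eq_zero {K : Type*} [Field K] [Fintype K] {p : K[X]}
    (hp : p.natDegree < Fintype.card K - 1) : ∑ x : K, p.eval x = 0 := by
  simp_rw [eval_eq_sum_range, Finset.sum_comm (s := univ), ← Finset.mul_sum]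
  exact Finset.sum_eq_zero fun m hm => by
    rw [FiniteField.sum_pow_lt_card_sub_one (K := K) m (by simp at hm; omega), mul_zero]

theorem sum_mul_eval_eq_zero_of_mem_rsCode {F : Type*} [Field F] [Fintype F] {n k : ℕ}
    {α : Fin n → F} (hα : Function.Bijective α) {g : F[X]}
    (hg : k + g.natDegree < Fintype.card F) {c : Fin n → F} (hc : c ∈ rsCode k α) :
    ∑ j, c j * g.eval (α j) = 0 := by
  obtain ⟨f, hf, hcf⟩ := hc
  obtain rfl : c = fun j => f.eval (α j) := funext hcf
  by_cases hf0 : f = 0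
  · simp [hf0]
  have hfk : f.natDegree < k := (natDegree_lt_iff_degree_lt hf0).2 hf
  simp_rw [← eval_mul]
  rw [hα.sum_comp fun x => (f * g).eval x]
  exact FiniteField.sum_eval_eq_zero ((natDegree_mul_le).trans_lt (by omega))

theorem finrank_span_range_smul_eq_one {K V ι : Type*} [Field K] [AddCommGroup V] [Module K V]
    {c : ι → K} (hc : c ≠ 0) {v : V} (hv : v ≠ 0) :
    Module.finrank K (Submodule.span K (Set.range fun w => c w • v)) = 1 := by
  obtain ⟨w, hw⟩ := Function.ne_iff.mp hc
  have : Submodule.span K (Set.range fun w => c w • v) = K ∙ v := by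
    refine le_antisymm (Submodule.span_le.2 ?_) ((Submodule.span_singleton_le_iff_mem _ _).2 ?_)
    · rintro _ ⟨w, rfl⟩
      exact Submodule.smul_mem _ _ (Submodule.mem_span_singleton_self v)
    · have hcv : c w • v ∈ Submodule.span K (Set.range fun w => c w • v) :=
        Submodule.subset_span ⟨w, rfl⟩
      simpa only [inv_smul_smul₀ hw] using Submodule.smul_mem _ (c w)⁻¹ hcv
  rw [this, finrank_span_singleton hv]

theorem exists_trace_basis_mul_ne_zero {K L ι : Type*} [Field K] [Field L] [Algebra K L]
    [FiniteDimensional K L] [Algebra.IsSeparable K L] (b : Module.Basis ι K L) {d : L}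
    (hd : d ≠ 0) : ∃ w, Algebra.trace K L (b w * d) ≠ 0 := by
  by_contra! h
  refine hd ((traceForm_nondegenerate K L).2 d fun x => ?_)
  have : (Algebra.traceForm K L).flip d = 0 := b.ext fun w => by simpa using h w
  simpa using LinearMap.congr_fun this x

theorem fieldTrace_finrank_eq_algebraMap_trace (B : Type*) {F : Type*} [Field B] [Field F]
    [Fintype B] [Finite F] [Algebra B F] (x : F) :
    fieldTrace B (Module.finrank B F) x = algebraMap B F (Algebra.trace B F x) := by
  rw [FiniteField.algebraMap_trace_eq_sum_pow, Nat.card_eq_fintype_card, fieldTrace]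

section traceQuotient

variable (B : Type*) {F : Type*} [Field B] [Field F] [Fintype B]

/-- `(tr(z (X - a)))/(X - a)`, written out termwise. -/
noncomputable def traceQuotient (t : ℕ) (z a : F) : F[X] :=
  ∑ m ∈ range t, C (z ^ Fintype.card B ^ m) * (X - C a) ^ (Fintype.card B ^ m - 1)

theorem traceQuotient_eval_mul_sub [Algebra B F] (t : ℕ) (z a x : F) :
    (traceQuotient B t z a).eval x * (x - a) = fieldTrace B t (z * (x - a)) := by
  rw [traceQuotient, fieldTrace, eval_finsetSum, Finset.sum_mul]
  refine Finset.sum_congr rfl fun m _ => ?_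
  have : 1 ≤ Fintype.card B ^ m := Nat.one_le_pow _ _ Fintype.card_pos
  simp only [eval_mul, eval_C, eval_pow, eval_sub, eval_X, mul_pow, mul_assoc, ← pow_succ,
    Nat.sub_add_cancel this]

theorem traceQuotient_eval_self {t : ℕ} (ht : 0 < t) (z a : F) :
    (traceQuotient B t z a).eval a = z := by
  rw [traceQuotient, eval_finsetSum, Finset.sum_eq_single_of_mem 0 (mem_range.2 ht)]
  · simp
  · intro m _ hm
    have : 1 < Fintype.card B ^ m := Nat.one_lt_pow hm Fintype.one_lt_card
    simp [zero_pow (Nat.sub_ne_zero_of_lt this)]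

theorem natDegree_traceQuotient_le (t : ℕ) (z a : F) :
    (traceQuotient B t z a).natDegree ≤ Fintype.card B ^ (t - 1) - 1 := by
  refine natDegree_sum_le_of_forall_le _ _ fun m hm => (natDegree_C_mul_le _ _).trans ?_
  rw [natDegree_pow, natDegree_X_sub_C, mul_one]
  have := Nat.pow_le_pow_right (Fintype.card_pos (α := B)) (Nat.le_sub_one_of_lt (mem_range.1 hm))
  omega

theorem ite_div_sub_eq_eval_traceQuotient [Algebra B F] {n : ℕ} {α : Fin n → F}
    (hα : Function.Injective α) {t : ℕ} (ht : 0 < t) (i j : Fin n) (δ z : F) :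
    (if j = i then δ * z else δ * fieldTrace B t (z * (α j - α i)) / (α j - α i)) =
      (C δ * traceQuotient B t z (α i)).eval (α j) := by
  rw [eval_mul, eval_C]
  split_ifs with hj
  · rw [hj, traceQuotient_eval_self B ht]
  · have hd : α j - α i ≠ 0 := sub_ne_zero.2 (hα.ne hj)
    rw [← traceQuotient_eval_mul_sub, mul_div_assoc, mul_div_cancel_right₀ _ hd]

theorem add_natDegree_traceQuotient_lt [Fintype F] [Algebra B F] (z a : F) :
    Fintype.card F - Fintype.card F / Fintype.card B +
      (traceQuotient B (Module.finrank B F) z a).natDegree < Fintype.card F := by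
  have hle := natDegree_traceQuotient_le B (Module.finrank B F) z a
  have hq : 0 < Fintype.card B := Fintype.card_pos
  have ht : 0 < Module.finrank B F := Module.finrank_pos
  rw [Module.card_eq_pow_finrank (K := B) (V := F)]
  rw [show Fintype.card B ^ Module.finrank B F / Fintype.card B =
      Fintype.card B ^ (Module.finrank B F - 1) by simpa using Nat.pow_div (n := 1) ht hq]
  have := Nat.pow_le_pow_right hq (Nat.sub_le (Module.finrank B F) 1)
  have := Nat.one_le_pow (Module.finrank B F - 1) _ hq
  omega

end traceQuotient

theorem finrank_span_range_mul_fieldTrace_div_eq_one (B : Type*) {F ι : Type*} [Field B]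
    [Field F] [Fintype B] [Fintype F] [Algebra B F] (ζ : Module.Basis ι B F) {δ d : F}
    (hδ : δ ≠ 0) (hd : d ≠ 0) :
    Module.finrank B (Submodule.span B (Set.range fun w =>
      δ * fieldTrace B (Module.finrank B F) (ζ w * d) / d)) = 1 := by
  have hrow : (fun w => δ * fieldTrace B (Module.finrank B F) (ζ w * d) / d) =
      fun w => Algebra.trace B F (ζ w * d) • (δ / d) := by
    ext w
    rw [fieldTrace_finrank_eq_algebraMap_trace, Algebra.smul_def]
    ring
  obtain ⟨w, hw⟩ := exists_trace_basis_mul_ne_zero ζ hd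
  rw [hrow, finrank_span_range_smul_eq_one (Function.ne_iff.2 ⟨w, hw⟩) (div_ne_zero hδ hd)]

/-- Let `n = |F|`, let `C ⊆ F^n` be the full-length Reed-Solomon code
of dimension `k = n - n/|B|`, fix an index `i`, a nonzero `δ ∈ F` and a basis
`ζ_1, …, ζ_t` of `F` over `B`, and let `M ∈ F^{n × t}` be given by
`M[j,w] = δ·tr(ζ_w·(α_j - α_i))/(α_j - α_i)` for `j ≠ i` and `M[i,w] = δ·ζ_w`.
Then `M` is a repair matrix for `i` with bandwidth `n - 1`: its columns lie in the
dual code, the entries of row `i` are linearly independent over `B`, and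
`∑_{j ≠ i} dim_B span_B {M j w : w} = n - 1`. -/
theorem repair_matrix_single_failure
    {B F : Type*} [Field B] [Field F] [Fintype B] [Fintype F] [Algebra B F]
    {n t : ℕ} (ht : Module.finrank B F = t)
    (hn : n = Fintype.card F)
    (α : Fin n → F) (hα : Function.Bijective α)
    (k : ℕ) (hk : k = n - n / Fintype.card B)
    (i : Fin n) (δ : F) (hδ : δ ≠ 0) (ζ : Module.Basis (Fin t) B F)
    (M : Matrix (Fin n) (Fin t) F)
    (hM : ∀ j w, M j w =
      if j = i then δ * ζ w
      else δ * fieldTrace B t (ζ w * (α j - α i)) / (α j - α i)) :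
    (∀ w : Fin t, ∀ c ∈ rsCode k α, ∑ j, c j * M j w = 0) ∧
    LinearIndependent B (M i) ∧
    (∑ j ∈ ({i} : Finset (Fin n))ᶜ,
        Module.finrank B (Submodule.span B (Set.range (M j))) = n - 1) := by
  subst ht hn hk
  have ht : 0 < Module.finrank B F := Module.finrank_pos
  refine ⟨fun w c hc => ?_, ?_, ?_⟩
  · simp_rw [hM, ite_div_sub_eq_eval_traceQuotient B hα.injective ht]
    refine sum_mul_eval_eq_zero_of_mem_rsCode hα ?_ hc
    exact (Nat.add_le_add_left (natDegree_C_mul_le _ _) _).trans_lt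
      (add_natDegree_traceQuotient_lt B (ζ w) (α i))
  · rw [show M i = fun w => δ * ζ w from funext fun w => by rw [hM, if_pos rfl]]
    exact ζ.linearIndependent.map' (LinearMap.mulLeft B δ)
      (LinearMap.ker_eq_bot.2 (mul_right_injective₀ hδ))
  · calc ∑ j ∈ ({i} : Finset (Fin _))ᶜ, Module.finrank B (Submodule.span B (Set.range (M j)))
        = ∑ j ∈ ({i} : Finset (Fin _))ᶜ, 1 := sum_congr rfl fun j hj => by
          have hji : j ≠ i := by simpa using hj
          rw [show M j = _ from funext fun w => (hM j w).trans (if_neg hji)]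
          exact finrank_span_range_mul_fieldTrace_div_eq_one B ζ hδ
            (sub_ne_zero.2 (hα.injective.ne hji))
      _ = Fintype.card F - 1 := by simp [card_compl]
end

section
/- Let q = |B| and let L(X) = Σ_{m=0}^{s} c_m·X^{q^m} ∈ F[X] with c_0,...,c_s ∈ F. Let α_i, for i in an index set I of size r, be distinct elements of F, set F_I(X) = ∏_{i∈I}(X − α_i), and fix ζ ∈ F and an integer p with 1 ≤ p ≤ r. Then F_I(X) divides L(ζ·F_I(X)·X^{p−1}) in F[X], the quotient equals P(X) = Σ_{m=0}^{s} c_m·ζ^{q^m}·F_I(X)^{q^m−1}·X^{(p−1)·q^m}, the degree of P is at most q^s·(2r−1) − r, and P(α_i) = c_0·ζ·α_i^{p−1} for every i ∈ I. -/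
/-!
Writing `g = ζ · F_I · X^(p-1)`, each monomial of `L` becomes `c_m g^(q^m)`, and
`g^(q^m) = F_I · F_I^(q^m - 1) · ζ^(q^m) X^((p-1) q^m)` because `q^m ≥ 1`; factoring out `F_I`
gives `L(g) = F_I · P`. At a root `α_i` of `F_I` every term of `P` with `m ≥ 1` still carries a
positive power of `F_I` (as `q ≥ 2`), so only the `m = 0` term survives. The degree bound is
the termwise estimate `(q^m - 1) r + (p - 1) q^m ≤ q^s (2r - 1) - r`.
-/

open Polynomial

namespace Polynomial

variable {R : Type*} [CommRing R]

theorem sum_C_mul_X_pow_comp_C_mul_mul_X_pow {ι : Type*} (S : Finset ι) (c : ι → R)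
    (e : ι → ℕ) (he : ∀ i ∈ S, e i ≠ 0) (ζ : R) (f : R[X]) (k : ℕ) :
    (∑ i ∈ S, C (c i) * X ^ e i).comp (C ζ * f * X ^ k) =
      f * ∑ i ∈ S, C (c i * ζ ^ e i) * f ^ (e i - 1) * X ^ (k * e i) := by
  rw [sum_comp, Finset.mul_sum]
  refine Finset.sum_congr rfl fun i hi => ?_
  rw [mul_comp, C_comp, pow_comp, X_comp, mul_pow, mul_pow, ← C_pow, ← pow_mul,
    ← mul_pow_sub_one (he i hi) f, C_mul]
  ring

theorem natDegree_C_mul_pow_pred_mul_X_pow_le (a : R) (f : R[X]) (n k : ℕ) :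
    (C a * f ^ (n - 1) * X ^ (k * n)).natDegree ≤ (n - 1) * f.natDegree + k * n := by
  refine natDegree_mul_le.trans (add_le_add (natDegree_mul_le.trans ?_) (natDegree_X_pow_le _))
  simpa using natDegree_pow_le (p := f) (n := n - 1)

theorem eval_sum_C_mul_pow_pred_mul_X_pow_of_isRoot {q : ℕ} (hq : 1 < q) (s k : ℕ)
    (a : ℕ → R) {f : R[X]} {x : R} (hx : f.IsRoot x) :
    (∑ m ∈ Finset.range (s + 1), C (a m) * f ^ (q ^ m - 1) * X ^ (k * q ^ m)).eval x =
      a 0 * x ^ k := by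
  rw [eval_finsetSum, Finset.sum_eq_single_of_mem 0 (by simp)]
  · simp
  · intro m _ hm
    have hpos : q ^ m - 1 ≠ 0 := Nat.sub_ne_zero_of_lt (Nat.one_lt_pow hm hq)
    simp [hx.eq_zero, zero_pow hpos]

end Polynomial

theorem Nat.pred_mul_add_pred_mul_le {A N r p : ℕ} (hA : 1 ≤ A) (hAN : A ≤ N) (hpr : p ≤ r) :
    (A - 1) * r + (p - 1) * A ≤ N * (2 * r - 1) - r := by
  rcases Nat.eq_zero_or_pos r with rfl | hr
  · simp_all
  obtain ⟨a, rfl⟩ := Nat.exists_eq_add_of_le hA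
  obtain ⟨b, rfl⟩ := Nat.exists_eq_add_of_le hr
  obtain ⟨e, rfl⟩ := Nat.exists_eq_add_of_le hAN
  have hpb : p - 1 ≤ b := by omega
  rw [show 2 * (1 + b) - 1 = 2 * b + 1 by omega, Nat.add_sub_cancel_left,
    Nat.le_sub_iff_add_le (by nlinarith)]
  nlinarith

theorem linearized_composition_divisibility_general
    {B F : Type*} [Field B] [Field F] [Fintype B]
    {s r p : ℕ} (hpr : p ≤ r)
    (c : ℕ → F) (α : Fin r → F) (ζ : F) :
    let q := Fintype.card B
    let FI : Polynomial F := ∏ i, (X - C (α i))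
    let L : Polynomial F := ∑ m ∈ Finset.range (s + 1), C (c m) * X ^ q ^ m
    let P : Polynomial F := ∑ m ∈ Finset.range (s + 1),
      C (c m * ζ ^ q ^ m) * FI ^ (q ^ m - 1) * X ^ ((p - 1) * q ^ m)
    FI ∣ L.comp (C ζ * FI * X ^ (p - 1)) ∧
    L.comp (C ζ * FI * X ^ (p - 1)) = FI * P ∧
    P.natDegree ≤ q ^ s * (2 * r - 1) - r ∧
    ∀ i : Fin r, P.eval (α i) = c 0 * ζ * (α i) ^ (p - 1) := by
  intro q FI L P
  have hq : 1 < q := Fintype.one_lt_card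
  have hqm : ∀ m, 1 ≤ q ^ m := fun m => Nat.one_le_pow _ _ (by omega)
  have hFI : FI.natDegree = r := by simp [FI]
  have key : L.comp (C ζ * FI * X ^ (p - 1)) = FI * P :=
    sum_C_mul_X_pow_comp_C_mul_mul_X_pow _ c (q ^ ·) (fun m _ => (Nat.one_le_iff_ne_zero.mp (hqm m))) ζ FI (p - 1)
  refine ⟨Dvd.intro P key.symm, key, ?_, fun i => ?_⟩
  · refine natDegree_sum_le_of_forall_le _ _ fun m hm => ?_
    have hms : q ^ m ≤ q ^ s :=
      Nat.pow_le_pow_right (by omega) (Nat.lt_succ_iff.mp (Finset.mem_range.mp hm))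
    exact (natDegree_C_mul_pow_pred_mul_X_pow_le _ FI _ _).trans
      (by rw [hFI]; exact Nat.pred_mul_add_pred_mul_le (hqm m) hms hpr)
  · have hroot : FI.IsRoot (α i) := by
      simp [FI, IsRoot, eval_prod, Finset.prod_eq_zero_iff, sub_eq_zero]
    have := eval_sum_C_mul_pow_pred_mul_X_pow_of_isRoot hq s (p - 1)
      (fun m => c m * ζ ^ q ^ m) hroot
    rw [pow_zero, pow_one] at this
    exact this

/-- Let `q = |B|`, `L(X) = ∑_{m=0}^s c_m X^{q^m}`, `F_I(X) =
∏_{i∈I}(X - α_i)` with the `α_i` distinct, `|I| = r ≥ 1`, `ζ ∈ F`, and `1 ≤ p ≤ r`.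
Then `F_I(X)` divides `L(ζ·F_I(X)·X^{p-1})`, the quotient equals
`P(X) = ∑_{m=0}^s c_m ζ^{q^m} F_I(X)^{q^m - 1} X^{(p-1)q^m}`, `deg P ≤ q^s(2r-1) - r`,
and `P(α_i) = c_0 · ζ · α_i^{p-1}` for every `i ∈ I`. -/
theorem linearized_composition_divisibility
    {B F : Type*} [Field B] [Field F] [Fintype B] [Algebra B F]
    {s r p : ℕ} (hr : 1 ≤ r) (hp1 : 1 ≤ p) (hpr : p ≤ r)
    (c : ℕ → F) (α : Fin r → F) (hα : Function.Injective α) (ζ : F) :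
    let q := Fintype.card B
    let FI : Polynomial F := ∏ i, (X - C (α i))
    let L : Polynomial F := ∑ m ∈ Finset.range (s + 1), C (c m) * X ^ q ^ m
    let P : Polynomial F := ∑ m ∈ Finset.range (s + 1),
      C (c m * ζ ^ q ^ m) * FI ^ (q ^ m - 1) * X ^ ((p - 1) * q ^ m)
    FI ∣ L.comp (C ζ * FI * X ^ (p - 1)) ∧
    L.comp (C ζ * FI * X ^ (p - 1)) = FI * P ∧
    P.natDegree ≤ q ^ s * (2 * r - 1) - r ∧
    ∀ i : Fin r, P.eval (α i) = c 0 * ζ * (α i) ^ (p - 1) :=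
  linearized_composition_divisibility_general hpr c α ζ
end

section
/- Let ζ_1,...,ζ_t be a basis of F over B, let c ∈ F be nonzero, let λ_1,...,λ_r ∈ F be nonzero, and let β_1,...,β_r be distinct elements of F. Define A ∈ F^{r×rt} with rows indexed by i ∈ {1,...,r} and columns indexed by pairs (w,p) with 1 ≤ w ≤ t, 1 ≤ p ≤ r, via A[i,(w,p)] = λ_i·c·ζ_w·β_i^{p−1}. Then for every nonzero x ∈ B^{rt} there exists i ∈ {1,...,r} such that Σ_{(w,p)} A[i,(w,p)]·x_{(w,p)} ≠ 0; that is, A·x ≠ 0 for all nonzero x ∈ B^{rt}. -/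
/-! Sorting the sum by powers of `β i`, row `i` of `A x` equals `λ_i c Q(β_i)` with
`Q = ∑_p (∑_w x_{(w,p)} ζ_w) X^p`. Since the `ζ_w` are linearly independent over `B`, some
coefficient of `Q` is nonzero; `Q` has degree `< r` and so cannot vanish at the `r` distinct
points `β_i`, which is the invertibility of the Vandermonde matrix of the `β_i`. -/

open Finset

theorem LinearIndependent.exists_sum_smul_ne_zero {R M ι κ : Type*} [Semiring R]
    [AddCommMonoid M] [Module R M] [Fintype ι] {v : ι → M} (hv : LinearIndependent R v)
    {x : ι × κ → R} (hx : x ≠ 0) : ∃ p, ∑ w, x (w, p) • v w ≠ 0 := by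
  obtain ⟨⟨w, p⟩, hwp⟩ := Function.ne_iff.mp hx
  exact ⟨p, fun h => hwp (Fintype.linearIndependent_iffₛ.mp hv (fun w => x (w, p)) 0
    (by simpa using h) w)⟩

theorem Function.Injective.exists_sum_mul_pow_ne_zero {R : Type*} [CommRing R] [IsDomain R]
    {n : ℕ} {β : Fin n → R} (hβ : Function.Injective β) {y : Fin n → R} (hy : y ≠ 0) :
    ∃ i, ∑ p, y p * β i ^ (p : ℕ) ≠ 0 := by
  by_contra! h
  refine hy (Matrix.eq_zero_of_mulVec_eq_zero (Matrix.det_vandermonde_ne_zero_iff.mpr hβ) ?_)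
  ext i
  simpa [Matrix.mulVec, dotProduct, Matrix.vandermonde_apply, mul_comm] using h i

theorem vandermonde_block_full_rank_general
    {B F : Type*} [Field B] [Field F] [Algebra B F]
    {t r : ℕ}
    (ζ : Module.Basis (Fin t) B F) (c : F) (hc : c ≠ 0)
    (lam : Fin r → F) (hlam : ∀ i, lam i ≠ 0)
    (β : Fin r → F) (hβ : Function.Injective β)
    (A : Fin r → Fin t × Fin r → F)
    (hA : ∀ (i : Fin r) (w : Fin t) (p : Fin r),
      A i (w, p) = lam i * c * ζ w * β i ^ (p : ℕ)) :
    ∀ x : Fin t × Fin r → B, x ≠ 0 →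
      ∃ i : Fin r, ∑ wp, A i wp * algebraMap B F (x wp) ≠ 0 := by
  intro x hx
  have row_eq : ∀ i, ∑ wp, A i wp * algebraMap B F (x wp) =
      lam i * c * ∑ p, (∑ w, x (w, p) • ζ w) * β i ^ (p : ℕ) := by
    intro i
    simp only [Fintype.sum_prod_type, hA, Algebra.smul_def, mul_sum, sum_mul]
    rw [sum_comm]
    exact sum_congr rfl fun _ _ => sum_congr rfl fun _ _ => by ring
  obtain ⟨p, hp⟩ := ζ.linearIndependent.exists_sum_smul_ne_zero hx
  obtain ⟨i, hi⟩ := hβ.exists_sum_mul_pow_ne_zero (y := fun p => ∑ w, x (w, p) • ζ w)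
    (Function.ne_iff.mpr ⟨p, hp⟩)
  exact ⟨i, by rw [row_eq]; exact mul_ne_zero (mul_ne_zero (hlam i) hc) hi⟩

/-- Let `ζ_1, …, ζ_t` be a basis of `F` over `B`, `c ≠ 0`,
`λ_1, …, λ_r ≠ 0`, and `β_1, …, β_r` distinct elements of `F`. If
`A[i,(w,p)] = λ_i · c · ζ_w · β_i^{p-1}` then `A·x ≠ 0` for every nonzero
`x ∈ B^{rt}`: there is a row `i` with `∑_{(w,p)} A[i,(w,p)]·x_{(w,p)} ≠ 0`. -/
theorem vandermonde_block_full_rank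
    {B F : Type*} [Field B] [Field F] [Fintype B] [Fintype F] [Algebra B F]
    {t r : ℕ} (ht : Module.finrank B F = t)
    (ζ : Module.Basis (Fin t) B F) (c : F) (hc : c ≠ 0)
    (lam : Fin r → F) (hlam : ∀ i, lam i ≠ 0)
    (β : Fin r → F) (hβ : Function.Injective β)
    (A : Fin r → Fin t × Fin r → F)
    (hA : ∀ (i : Fin r) (w : Fin t) (p : Fin r),
      A i (w, p) = lam i * c * ζ w * β i ^ (p : ℕ)) :
    ∀ x : Fin t × Fin r → B, x ≠ 0 →
      ∃ i : Fin r, ∑ wp, A i wp * algebraMap B F (x wp) ≠ 0 :=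
  vandermonde_block_full_rank_general ζ c hc lam hlam β hβ A hA
end

section
/- Let r ≥ 1 and let M ∈ F^{r×rt} be a matrix over F. Define the B-linear map ψ : B^{rt} → F^r by ψ(y) = M·y, and the B-linear map φ : F^r → B^{rt} by φ(x)_ℓ = tr_{F/B}(Σ_{i=1}^r x_i·M[i,ℓ]) for 1 ≤ ℓ ≤ rt. If ψ is injective, then φ is bijective. -/
/-!
The map `φ` is the adjoint of `ψ` with respect to the pairing `(x, z) ↦ tr_{F/B}(x ⬝ᵥ z)` on
`F^r` and the standard dot product on `B^{rt}`: `tr(x ⬝ᵥ ψ y) = φ x ⬝ᵥ y`. Both spaces have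
`B`-dimension `rt`, so the injective `ψ` is surjective; if `φ x = 0` then `x` is orthogonal to
all of `F^r`, hence `x = 0` because the trace form of the separable extension `F/B` is
nondegenerate. Thus `φ` is injective, and by equality of dimensions bijective.
-/

namespace Matrix

variable {B F : Type*} {m n : Type*} [Fintype m] [Fintype n]

section CommRing

variable [CommRing B] [CommRing F] [Algebra B F]

def mulVecAlgebraMap (M : Matrix m n F) : (n → B) →ₗ[B] (m → F) :=
  M.mulVecLin.restrictScalars B ∘ₗ (Algebra.linearMap B F).compLeft n

noncomputable def traceVecMul (M : Matrix m n F) : (m → F) →ₗ[B] (n → B) :=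
  (Algebra.trace B F).compLeft n ∘ₗ M.vecMulLinear.restrictScalars B

theorem trace_dotProduct_mulVecAlgebraMap (M : Matrix m n F) (x : m → F) (y : n → B) :
    Algebra.trace B F (x ⬝ᵥ M.mulVecAlgebraMap y) = M.traceVecMul x ⬝ᵥ y := by
  change Algebra.trace B F (x ⬝ᵥ M *ᵥ (algebraMap B F ∘ y)) = _
  rw [dotProduct_mulVec, dotProduct, map_sum]
  refine Finset.sum_congr rfl fun j _ => ?_
  rw [Function.comp_apply, mul_comm, ← Algebra.smul_def, map_smul, smul_eq_mul, mul_comm]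
  rfl

end CommRing

variable [Field B] [Field F] [Algebra B F] [FiniteDimensional B F] [Algebra.IsSeparable B F]

theorem eq_zero_of_trace_dotProduct_eq_zero {x : m → F}
    (hx : ∀ z : m → F, Algebra.trace B F (x ⬝ᵥ z) = 0) : x = 0 := by
  classical
  funext i
  refine (traceForm_nondegenerate B F).1 (x i) fun c => ?_
  simpa [dotProduct_single] using hx (Pi.single i c)

theorem traceVecMul_injective_of_surjective {M : Matrix m n F}
    (hM : Function.Surjective (M.mulVecAlgebraMap (B := B))) :
    Function.Injective (M.traceVecMul (B := B)) := by
  rw [← LinearMap.ker_eq_bot, LinearMap.ker_eq_bot']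
  intro x hx
  refine eq_zero_of_trace_dotProduct_eq_zero (B := B) fun z => ?_
  obtain ⟨y, rfl⟩ := hM z
  rw [trace_dotProduct_mulVecAlgebraMap, hx, zero_dotProduct]

end Matrix

theorem adjoint_trace_map_bijective_general
    {B F : Type*} [Field B] [Field F] [Fintype F] [Algebra B F]
    {t r : ℕ} (ht : Module.finrank B F = t)
    (M : Matrix (Fin r) (Fin (r * t)) F)
    (hψ : Function.Injective (fun y : Fin (r * t) → B =>
      fun i : Fin r => ∑ ℓ, M i ℓ * algebraMap B F (y ℓ))) :
    Function.Bijective (fun x : Fin r → F =>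
      fun ℓ : Fin (r * t) => Algebra.trace B F (∑ i, x i * M i ℓ)) := by
  have hdim : Module.finrank B (Fin (r * t) → B) = Module.finrank B (Fin r → F) := by
    simp [Module.finrank_pi_fintype, ht]
  have hψ_surj : Function.Surjective (M.mulVecAlgebraMap (B := B)) :=
    (LinearMap.injective_iff_surjective_of_finrank_eq_finrank hdim).mp hψ
  have hφ_inj : Function.Injective (M.traceVecMul (B := B)) :=
    Matrix.traceVecMul_injective_of_surjective hψ_surj
  exact ⟨hφ_inj, (LinearMap.injective_iff_surjective_of_finrank_eq_finrank hdim.symm).mp hφ_inj⟩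

/-- Let `M ∈ F^{r × rt}` and define the `B`-linear maps
`ψ : B^{rt} → F^r`, `ψ(y) = M·y`, and `φ : F^r → B^{rt}`,
`φ(x)_ℓ = tr_{F/B}(∑_i x_i · M[i,ℓ])`. If `ψ` is injective, then `φ` is bijective. -/
theorem adjoint_trace_map_bijective
    {B F : Type*} [Field B] [Field F] [Fintype B] [Fintype F] [Algebra B F]
    {t r : ℕ} (ht : Module.finrank B F = t) (hr : 1 ≤ r)
    (M : Matrix (Fin r) (Fin (r * t)) F)
    (hψ : Function.Injective (fun y : Fin (r * t) → B =>
      fun i : Fin r => ∑ ℓ, M i ℓ * algebraMap B F (y ℓ))) :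
    Function.Bijective (fun x : Fin r → F =>
      fun ℓ : Fin (r * t) => Algebra.trace B F (∑ i, x i * M i ℓ)) :=
  adjoint_trace_map_bijective_general ht M hψ
end

section
/- Let A ∈ F^{r×m}, let i ≠ j be indices in {1,...,r}, and let γ ∈ F be nonzero. Define f_γ : F → F by f_γ(x) = γ·tr_{F/B}(x/γ), and let A' ∈ F^{r×m} be the matrix with A'[j,w] = A[j,w] + f_γ(A[i,w]) for all w, and A'[ℓ,w] = A[ℓ,w] for all ℓ ≠ j. Then {(tr_{F/B}(Σ_{ℓ=1}^r x_ℓ·A[ℓ,w]))_{w∈{1,...,m}} : x ∈ F^r} = {(tr_{F/B}(Σ_{ℓ=1}^r x_ℓ·A'[ℓ,w]))_{w∈{1,...,m}} : x ∈ F^r} as subsets of B^m. -/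
/-!
With `f_γ(a) = γ · tr(a / γ)`, the trace form satisfies
`tr(x · f_γ(a)) = tr(x γ) · tr(a / γ) = tr(f_{1/γ}(x) · a)`, so `f_{1/γ}` is adjoint to `f_γ`.
Hence adding `f_γ` of row `i` to row `j` changes `tr(x A)` exactly as replacing `x_i` by
`x_i + f_{1/γ}(x_j)` does, and for `i ≠ j` this substitution is a bijection of `F^r`.
-/

open Matrix

def shearEquiv {R ι : Type*} [Ring R] [DecidableEq ι] (g : R → R) {i j : ι} (hij : i ≠ j) :
    (ι → R) ≃ (ι → R) where
  toFun x := x + Pi.single i (g (x j))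
  invFun x := x - Pi.single i (g (x j))
  left_inv x := by simp [hij.symm]
  right_inv x := by simp [hij.symm]

theorem vecMul_apply_of_row_add {R ι κ : Type*} [Ring R] [Fintype ι] [DecidableEq ι]
    {f : R → R} {A A' : Matrix ι κ R} {i j : ι}
    (hA'j : ∀ w, A' j w = A j w + f (A i w)) (hA' : ∀ ℓ, ℓ ≠ j → ∀ w, A' ℓ w = A ℓ w)
    (x : ι → R) (w : κ) : (x ᵥ* A') w = (x ᵥ* A) w + x j * f (A i w) := by
  have hcol : (fun ℓ => A' ℓ w) = (fun ℓ => A ℓ w) + Pi.single j (f (A i w)) := by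
    funext ℓ
    rcases eq_or_ne ℓ j with rfl | hℓ
    · simp [hA'j]
    · simp [hA' ℓ hℓ, hℓ]
  simp only [vecMul, hcol, dotProduct_add, dotProduct_single]

theorem range_comp_vecMul_eq_of_row_add {R M ι κ : Type*} [Ring R] [AddCommMonoid M]
    [Fintype ι] [DecidableEq ι] (T : R →+ M) {f g : R → R}
    (hfg : ∀ x a, T (x * f a) = T (g x * a)) {A A' : Matrix ι κ R} {i j : ι} (hij : i ≠ j)
    (hA'j : ∀ w, A' j w = A j w + f (A i w)) (hA' : ∀ ℓ, ℓ ≠ j → ∀ w, A' ℓ w = A ℓ w) :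
    Set.range (fun x : ι → R => fun w => T ((x ᵥ* A) w)) =
      Set.range (fun x : ι → R => fun w => T ((x ᵥ* A') w)) := by
  have hshear (x : ι → R) (w : κ) : T ((shearEquiv g hij x ᵥ* A) w) = T ((x ᵥ* A') w) := by
    rw [vecMul_apply_of_row_add hA'j hA', shearEquiv, Equiv.coe_fn_mk, add_vecMul, single_vecMul,
      Pi.add_apply, map_add, map_add, Pi.smul_apply, row_apply, smul_eq_mul, hfg]
  rw [← (shearEquiv g hij).surjective.range_comp]
  exact congrArg Set.range (funext fun x => funext (hshear x))

noncomputable def scaledTrace (B : Type*) {F : Type*} [CommRing B] [Field F] [Algebra B F]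
    (γ a : F) : F :=
  γ * algebraMap B F (Algebra.trace B F (a / γ))

theorem trace_mul_scaledTrace {B F : Type*} [CommRing B] [Field F] [Algebra B F] (γ x a : F) :
    Algebra.trace B F (x * scaledTrace B γ a) = Algebra.trace B F (scaledTrace B γ⁻¹ x * a) := by
  have hl : x * scaledTrace B γ a = Algebra.trace B F (a / γ) • (x * γ) := by
    rw [scaledTrace, Algebra.smul_def]; ring
  have hr : scaledTrace B γ⁻¹ x * a = Algebra.trace B F (x * γ) • (a / γ) := by
    rw [scaledTrace, Algebra.smul_def, div_inv_eq_mul]; ring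
  rw [hl, hr, map_smul, map_smul, smul_eq_mul, smul_eq_mul, mul_comm]

theorem row_operation_preserves_trace_image_general
    {B F : Type*} [Field B] [Field F] [Algebra B F]
    {r m : ℕ}
    (A A' : Matrix (Fin r) (Fin m) F) (i j : Fin r) (hij : i ≠ j)
    (γ : F)
    (hA'j : ∀ w, A' j w = A j w + γ * algebraMap B F (Algebra.trace B F (A i w / γ)))
    (hA' : ∀ ℓ, ℓ ≠ j → ∀ w, A' ℓ w = A ℓ w) :
    Set.range (fun x : Fin r → F =>
        fun w : Fin m => Algebra.trace B F (∑ ℓ, x ℓ * A ℓ w)) =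
      Set.range (fun x : Fin r → F =>
        fun w : Fin m => Algebra.trace B F (∑ ℓ, x ℓ * A' ℓ w)) :=
  range_comp_vecMul_eq_of_row_add (Algebra.trace B F).toAddMonoidHom
    (trace_mul_scaledTrace (B := B) γ) hij (f := scaledTrace B γ) hA'j hA'

/-- Let `A ∈ F^{r × m}`, `i ≠ j`, `γ ≠ 0`, and let `A'` be obtained
from `A` by adding `f_γ(A[i,:])` to row `j`, where `f_γ(x) = γ·tr_{F/B}(x/γ)`. Then
`{(tr(∑_ℓ x_ℓ A[ℓ,w]))_w : x ∈ F^r} = {(tr(∑_ℓ x_ℓ A'[ℓ,w]))_w : x ∈ F^r}` as subsets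
of `B^m`. -/
theorem row_operation_preserves_trace_image
    {B F : Type*} [Field B] [Field F] [Fintype B] [Fintype F] [Algebra B F]
    {t r m : ℕ} (ht : Module.finrank B F = t)
    (A A' : Matrix (Fin r) (Fin m) F) (i j : Fin r) (hij : i ≠ j)
    (γ : F) (hγ : γ ≠ 0)
    (hA'j : ∀ w, A' j w = A j w + γ * algebraMap B F (Algebra.trace B F (A i w / γ)))
    (hA' : ∀ ℓ, ℓ ≠ j → ∀ w, A' ℓ w = A ℓ w) :
    Set.range (fun x : Fin r → F =>
        fun w : Fin m => Algebra.trace B F (∑ ℓ, x ℓ * A ℓ w)) =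
      Set.range (fun x : Fin r → F =>
        fun w : Fin m => Algebra.trace B F (∑ ℓ, x ℓ * A' ℓ w)) :=
  row_operation_preserves_trace_image_general A A' i j hij γ hA'j hA'
end

section
/- Let α_1,...,α_r be distinct elements of F, let 2 ≤ ℓ ≤ r, and let δ_1,...,δ_{ℓ−1} ∈ F be nonzero. Assume t ≥ (ℓ−1)·r − ℓ(ℓ−1)/2. Then the set D = {δ ∈ F \ {0} : tr_{F/B}((δ/δ_j)·(α_s − α_j)/(α_j − α_ℓ)) = 0 for all 1 ≤ j ≤ ℓ−1 and all s with j < s ≤ r} has cardinality at least |B|^{t − (ℓ−1)·r + ℓ(ℓ−1)/2} − 1. -/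
open Finset

section Trace

variable {B F : Type*} [Field B] [Field F] [Fintype B] [Finite F] [Algebra B F] {t : ℕ}

theorem fieldTrace_eq_algebraMap_trace (ht : Module.finrank B F = t) (x : F) :
    fieldTrace B t x = algebraMap B F (Algebra.trace B F x) := by
  rw [FiniteField.algebraMap_trace_eq_sum_pow, ht, fieldTrace, Fintype.card_eq_nat_card]

theorem fieldTrace_eq_zero_iff (ht : Module.finrank B F = t) (x : F) :
    fieldTrace B t x = 0 ↔ Algebra.trace B F x = 0 := by
  rw [fieldTrace_eq_algebraMap_trace ht, map_eq_zero_iff _ (algebraMap B F).injective]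

end Trace

section CommonZeros

variable {K V ι : Type*} [Field K] [Fintype K] [AddCommGroup V] [Module K V] [Finite V]
  [Fintype ι]

theorem pow_finrank_sub_card_le_card_ker (φ : V →ₗ[K] ι → K) :
    Fintype.card K ^ (Module.finrank K V - Fintype.card ι) ≤ Nat.card (LinearMap.ker φ) := by
  classical
  have : Fintype V := Fintype.ofFinite V
  have hrange : Module.finrank K (LinearMap.range φ) ≤ Fintype.card ι :=
    (Submodule.finrank_le _).trans (Module.finrank_fintype_fun_eq_card K).le
  have hrank := LinearMap.finrank_range_add_finrank_ker φ
  rw [Nat.card_eq_fintype_card, Module.card_eq_pow_finrank (K := K) (V := LinearMap.ker φ)]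
  exact Nat.pow_le_pow_right Fintype.card_pos (by omega)

theorem pow_finrank_sub_card_sub_one_le_card_nonzero_common_zeros (f : ι → V →ₗ[K] K) :
    Fintype.card K ^ (Module.finrank K V - Fintype.card ι) - 1 ≤
      Nat.card {v : V | v ≠ 0 ∧ ∀ i, f i v = 0} := by
  have hker : (LinearMap.ker (LinearMap.pi f) : Set V) =
      insert 0 {v : V | v ≠ 0 ∧ ∀ i, f i v = 0} := by
    ext v
    by_cases hv : v = 0 <;> simp [hv, funext_iff]
  have h := pow_finrank_sub_card_le_card_ker (LinearMap.pi f)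
  rw [← SetLike.coe_sort_coe, hker, Nat.card_coe_set_eq, Set.ncard_insert_of_notMem (by simp),
    ← Nat.card_coe_set_eq] at h
  omega

end CommonZeros

theorem card_filter_range_lt (j r : ℕ) : #{s ∈ range r | j < s} = r - 1 - j := by
  have : {s ∈ range r | j < s} = Ioo j r := by
    ext s
    simp only [mem_filter, mem_range, mem_Ioo]
    omega
  rw [this, Nat.card_Ioo]
  omega

theorem sum_range_sub_one_sub_add_triangle {m r : ℕ} (hm : m ≤ r) :
    ∑ j ∈ range m, (r - 1 - j) + m * (m + 1) / 2 = m * r := by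
  induction m with
  | zero => simp
  | succ m ih =>
    have htriangle : (m + 1) * (m + 2) / 2 = m * (m + 1) / 2 + (m + 1) := by
      rw [show (m + 1) * (m + 2) = m * (m + 1) + (m + 1) * 2 by ring,
        Nat.add_mul_div_right _ _ two_pos]
    rw [sum_range_succ, htriangle, add_mul, one_mul, ← ih (by omega)]
    omega

theorem card_fin_pairs_val_lt_add {m r : ℕ} (hm : m ≤ r) :
    Fintype.card {p : Fin m × Fin r // (p.1 : ℕ) < p.2} + m * (m + 1) / 2 = m * r := by
  rw [Fintype.card_subtype, card_filter, Fintype.sum_prod_type,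
    Fin.sum_univ_eq_sum_range (fun j => ∑ s : Fin r, if j < (s : ℕ) then 1 else 0)]
  convert sum_range_sub_one_sub_add_triangle hm using 3 with j
  rw [Fin.sum_univ_eq_sum_range (fun s => if j < s then 1 else 0), ← card_filter,
    card_filter_range_lt]

/-- Let `α_1, …, α_r` be distinct, `2 ≤ ℓ ≤ r`, and `δ_1, …, δ_{ℓ-1}`
nonzero. If `t ≥ (ℓ-1)·r - ℓ(ℓ-1)/2` then the set of nonzero `δ ∈ F` with
`tr((δ/δ_j)·(α_s - α_j)/(α_j - α_ℓ)) = 0` for all `1 ≤ j ≤ ℓ-1` and `j < s ≤ r` has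
at least `|B|^{t - (ℓ-1)·r + ℓ(ℓ-1)/2} - 1` elements. -/
theorem good_multiplier_count
    {B F : Type*} [Field B] [Field F] [Fintype B] [Fintype F] [Algebra B F]
    {t r ℓ : ℕ} (ht : Module.finrank B F = t)
    (α : Fin r → F)
    (hℓ2 : 2 ≤ ℓ) (hℓr : ℓ ≤ r)
    (δ : Fin (ℓ - 1) → F) :
    Fintype.card B ^ (t + ℓ * (ℓ - 1) / 2 - (ℓ - 1) * r) - 1 ≤
      Nat.card {d : F | d ≠ 0 ∧
        ∀ (j : Fin (ℓ - 1)) (s : Fin r), (j : ℕ) < (s : ℕ) →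
          fieldTrace B t ((d / δ j) *
            ((α s - α (Fin.castLE (by omega) j)) /
              (α (Fin.castLE (by omega) j) - α ⟨ℓ - 1, by omega⟩))) = 0} := by
  have hpairs := card_fin_pairs_val_lt_add (m := ℓ - 1) (r := r) (by omega)
  rw [Nat.sub_add_cancel (by omega : 1 ≤ ℓ), mul_comm (ℓ - 1) ℓ] at hpairs
  let f (p : {p : Fin (ℓ - 1) × Fin r // (p.1 : ℕ) < p.2}) : F →ₗ[B] B :=
    Algebra.trace B F ∘ₗ LinearMap.mulRight B ((α p.1.2 - α (Fin.castLE (by omega) p.1.1)) /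
      (α (Fin.castLE (by omega) p.1.1) - α ⟨ℓ - 1, by omega⟩)) ∘ₗ
      LinearMap.mulRight B (δ p.1.1)⁻¹
  calc _ ≤ Fintype.card B ^
          (Module.finrank B F - Fintype.card {p : Fin (ℓ - 1) × Fin r // (p.1 : ℕ) < p.2}) - 1 :=
        Nat.sub_le_sub_right (Nat.pow_le_pow_right Fintype.card_pos (by omega)) 1
    _ ≤ _ := pow_finrank_sub_card_sub_one_le_card_nonzero_common_zeros f
    _ = _ := by
      congr 2
      ext d
      simp [f, fieldTrace_eq_zero_iff ht, div_eq_mul_inv, mul_assoc]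
end

section
/- Let n = |F| and let α_1,...,α_n enumerate F. Let 2 ≤ ℓ+1 ≤ r ≤ n, let δ_1,...,δ_ℓ ∈ F be nonzero, and let S_ℓ = {i ∈ {1,...,n} \ {1,...,r} : ∃ 1 ≤ j < k ≤ ℓ such that (j,k) collide at i}. Fix j with 1 ≤ j ≤ ℓ, and for nonzero δ ∈ F define T_j(δ) = {i ∈ {1,...,n} : α_i ∉ {α_j, α_{ℓ+1}} and (δ/(α_i − α_{ℓ+1}))·B* = (δ_j/(α_i − α_j))·B*}. Then for all but at most r + |S_ℓ| + 1 cosets γ·B* in the quotient group F*/B*, the following holds: every δ ∈ γ·B* satisfies |T_j(δ)| = |B| − 1 and T_j(δ) ∩ ({1,...,r} ∪ S_ℓ) = ∅. -/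
/-! With `t = δ_j`, `a = α_j`, `c = α_{ℓ+1}`, clearing denominators turns `T_j(δ)` into the
preimage of the coset `δ·B*` under the Möbius map `x ↦ t (x - c) / (x - a)`, which is a
bijection from `F \ {a, c}` onto `F \ {0, t}`. So once `δ·B*` avoids `t` it has exactly
`|B*| = |B| - 1` preimages; excluding also the cosets of the images of the at most `r + |S_ℓ|`
points of `{1,…,r} ∪ S_ℓ` makes `T_j(δ)` miss that set. -/

def SameCoset (B : Type*) {F : Type*} [Field B] [Field F] [Algebra B F] (x y : F) : Prop :=
  ∃ b : B, b ≠ 0 ∧ x = y * algebraMap B F b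

def CollidesAt (B : Type*) {F : Type*} [Field B] [Field F] [Algebra B F]
    (δa δb αa αb αi : F) : Prop :=
  αi ≠ αa ∧ αi ≠ αb ∧ SameCoset B (δa / (αi - αa)) (δb / (αi - αb))

section Cosets

variable {B F : Type*} [Field B] [Field F] [Algebra B F]

lemma sameCoset_div_iff {d t u v : F} (hu : u ≠ 0) (hv : v ≠ 0) :
    SameCoset B (d / u) (t / v) ↔ SameCoset B d (t * u / v) := by
  refine exists_congr fun b => and_congr_right fun _ => ?_
  constructor
  · intro h
    field_simp at h ⊢
    linear_combination h
  · intro h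
    rw [h]
    field_simp

lemma not_sameCoset_zero_right {d : F} (hd : d ≠ 0) : ¬ SameCoset B d 0 := by
  rintro ⟨b, -, rfl⟩
  simp at hd

lemma setOf_sameCoset_eq_range (d : F) :
    {y : F | SameCoset B d y} = Set.range fun u : Bˣ => d / algebraMap B F u := by
  ext y
  constructor
  · rintro ⟨b, hb, rfl⟩
    refine ⟨Units.mk0 b hb, ?_⟩
    simp [hb]
  · rintro ⟨u, rfl⟩
    refine ⟨u, u.ne_zero, ?_⟩
    simp

lemma ncard_setOf_sameCoset [Fintype B] {d : F} (hd : d ≠ 0) :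
    {y : F | SameCoset B d y}.ncard = Fintype.card B - 1 := by
  classical
  rw [setOf_sameCoset_eq_range, Set.ncard_range_of_injective, Nat.card_eq_fintype_card,
    Fintype.card_units]
  intro u v huv
  simp only [div_eq_mul_inv, mul_right_inj' hd, inv_inj] at huv
  exact Units.ext ((algebraMap B F).injective huv)

end Cosets

section Moebius

variable {F : Type*} [Field F] {a c t : F}

lemma moebius_eq_iff {x y : F} (hx : x ≠ a) (hy : y ≠ t) :
    t * (x - c) / (x - a) = y ↔ x = (t * c - y * a) / (t - y) := by
  have hxa : x - a ≠ 0 := sub_ne_zero.mpr hx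
  have hty : t - y ≠ 0 := sub_ne_zero.mpr hy.symm
  rw [div_eq_iff hxa, eq_div_iff hty]
  constructor <;> intro h <;> linear_combination h

lemma ncard_setOf_moebius (hac : a ≠ c) (ht : t ≠ 0) {P : F → Prop} (h0 : ¬ P 0)
    (htP : ¬ P t) :
    {x : F | x ≠ a ∧ x ≠ c ∧ P (t * (x - c) / (x - a))}.ncard = {y : F | P y}.ncard := by
  have hne : ∀ {y}, P y → y ≠ t := fun hy h => htP (h ▸ hy)
  refine Set.ncard_congr (fun x _ => t * (x - c) / (x - a)) (fun x hx => hx.2.2) ?_ ?_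
  · rintro x x' ⟨hx, -, hPx⟩ ⟨hx', -, -⟩ h
    rw [(moebius_eq_iff hx (hne hPx)).mp rfl, (moebius_eq_iff hx' (hne hPx)).mp h.symm]
  · intro y hy
    rw [Set.mem_ofPred_eq] at hy
    set x := (t * c - y * a) / (t - y)
    have hxa : x ≠ a := by
      intro h
      rw [div_eq_iff (sub_ne_zero.mpr (hne hy).symm)] at h
      exact hac (mul_left_cancel₀ ht (by linear_combination h)).symm
    have hx : t * (x - c) / (x - a) = y := (moebius_eq_iff hxa (hne hy)).mpr rfl
    have hxc : x ≠ c := by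
      intro h
      rw [h, sub_self, mul_zero, zero_div] at hx
      exact h0 (hx ▸ hy)
    exact ⟨x, ⟨hxa, hxc, hx ▸ hy⟩, hx⟩

end Moebius

section BadCosets

variable {B F : Type*} [Field B] [Field F] [Algebra B F] [Fintype B] [DecidableEq F]

lemma exists_finset_forall_not_sameCoset {a c t : F} (hac : a ≠ c) (ht : t ≠ 0) (K : Finset F) :
    ∃ bad : Finset F, (∀ γ ∈ bad, γ ≠ 0) ∧ bad.card ≤ K.card + 1 ∧
      ∀ d : F, d ≠ 0 → (∀ γ ∈ bad, ¬ SameCoset B d γ) →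
        {x | x ≠ a ∧ x ≠ c ∧ SameCoset B d (t * (x - c) / (x - a))}.ncard =
            Fintype.card B - 1 ∧
          ∀ x ∈ K, ¬ (x ≠ a ∧ x ≠ c ∧ SameCoset B d (t * (x - c) / (x - a))) := by
  let g : F → F := fun x => t * (x - c) / (x - a)
  refine ⟨insert t ((K.filter fun x => x ≠ a ∧ x ≠ c).image g), ?_, ?_, ?_⟩
  · simp only [Finset.mem_insert, Finset.mem_image, Finset.mem_filter]
    rintro γ (rfl | ⟨x, ⟨-, hxa, hxc⟩, rfl⟩)
    · exact ht
    · exact div_ne_zero (mul_ne_zero ht (sub_ne_zero.mpr hxc)) (sub_ne_zero.mpr hxa)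
  · exact (Finset.card_insert_le _ _).trans
      (Nat.succ_le_succ (Finset.card_image_le.trans (Finset.card_filter_le _ _)))
  · intro d hd hbad
    refine ⟨?_, fun x hxK ⟨hxa, hxc, hx⟩ => hbad (g x) ?_ hx⟩
    · rw [ncard_setOf_moebius hac ht (not_sameCoset_zero_right hd)
        (hbad t (Finset.mem_insert_self _ _)), ncard_setOf_sameCoset hd]
    · exact Finset.mem_insert_of_mem
        (Finset.mem_image_of_mem g (Finset.mem_filter.mpr ⟨hxK, hxa, hxc⟩))

end BadCosets

lemma Fin.ncard_setOf_val_lt_union_le {n : ℕ} (r : ℕ) (S : Set (Fin n)) :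
    ({i : Fin n | (i : ℕ) < r} ∪ S).ncard ≤ r + S.ncard := by
  classical
  refine (Set.ncard_union_le _ _).trans (Nat.add_le_add_right ?_ _)
  rw [Set.ncard_eq_toFinset_card', Set.toFinset_ofPred, Fin.card_filter_val_lt]
  exact min_le_right _ _

/-- Let `n = |F|`, `α` enumerate `F`, `2 ≤ ℓ+1 ≤ r ≤ n`, let
`δ_1, …, δ_ℓ` be nonzero, and let
`S_ℓ = {i ∉ {1,…,r} : ∃ j < k ≤ ℓ, (j,k) collide at i}`. Fix `j ≤ ℓ` and for nonzero
`δ` let `T_j(δ) = {i : α_i ∉ {α_j, α_{ℓ+1}} ∧ (δ/(α_i - α_{ℓ+1}))·B* = (δ_j/(α_i - α_j))·B*}`.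
Then for all but at most `r + |S_ℓ| + 1` cosets `γ·B*` in `F*/B*`: every `δ ∈ γ·B*`
satisfies `|T_j(δ)| = |B| - 1` and `T_j(δ) ∩ ({1,…,r} ∪ S_ℓ) = ∅`.
(Formally: there is a set `bad` of at most `r + |S_ℓ| + 1` nonzero coset
representatives such that every nonzero `δ` lying in no bad coset satisfies both
conclusions.) -/
theorem good_cosets_for_collision_sets
    {B F : Type*} [Field B] [Field F] [Fintype B] [Algebra B F]
    {n r ℓ : ℕ}
    (α : Fin n → F) (hα : Function.Bijective α)
    (hℓr : ℓ + 1 ≤ r) (hrn : r ≤ n)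
    (δ : Fin ℓ → F) (hδ : ∀ a, δ a ≠ 0)
    (S : Set (Fin n))
    (j : Fin ℓ)
    (T : F → Set (Fin n))
    (hT : ∀ d : F, T d = {i : Fin n |
      α i ≠ α (Fin.castLE (by omega) j) ∧ α i ≠ α ⟨ℓ, by omega⟩ ∧
      SameCoset B (d / (α i - α ⟨ℓ, by omega⟩))
        (δ j / (α i - α (Fin.castLE (by omega) j)))}) :
    ∃ bad : Finset F, (∀ γ ∈ bad, γ ≠ 0) ∧ bad.card ≤ r + Nat.card S + 1 ∧
      ∀ d : F, d ≠ 0 → (∀ γ ∈ bad, ¬ SameCoset B d γ) →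
        Nat.card (T d) = Fintype.card B - 1 ∧
        T d ∩ ({i : Fin n | (i : ℕ) < r} ∪ S) = ∅ := by
  classical
  have hℓn : ℓ < n := by omega
  set a := α (Fin.castLE hℓn.le j)
  set c := α ⟨ℓ, hℓn⟩
  have hac : a ≠ c := fun h => by
    have := congrArg Fin.val (hα.1 h)
    simp only [Fin.val_castLE] at this
    omega
  have hTd : ∀ d, T d =
      α ⁻¹' {x | x ≠ a ∧ x ≠ c ∧ SameCoset B d (δ j * (x - c) / (x - a))} := by
    intro d
    ext i
    rw [hT]
    exact and_congr_right fun hia => and_congr_right fun hic =>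
      sameCoset_div_iff (sub_ne_zero.mpr hic) (sub_ne_zero.mpr hia)
  set K := {i : Fin n | (i : ℕ) < r} ∪ S
  obtain ⟨bad, hbad0, hcard, hgood⟩ :=
    exists_finset_forall_not_sameCoset (B := B) hac (hδ j) (K.toFinset.image α)
  refine ⟨bad, hbad0, hcard.trans ?_, fun d hd hbad => ?_⟩
  · have hKcard : K.toFinset.card ≤ r + Nat.card S := by
      rw [← Set.ncard_eq_toFinset_card', Nat.card_coe_set_eq]
      exact Fin.ncard_setOf_val_lt_union_le r S
    exact Nat.add_le_add_right (Finset.card_image_le.trans hKcard) 1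
  obtain ⟨hcardT, hK⟩ := hgood d hd hbad
  rw [hTd]
  refine ⟨?_, Set.eq_empty_of_forall_notMem fun i ⟨hiT, hiK⟩ => ?_⟩
  · rw [Nat.card_coe_set_eq, Set.ncard_preimage_of_injective_subset_range hα.1
      (hα.2.range_eq ▸ Set.subset_univ _), hcardT]
  · exact hK (α i) (Finset.mem_image_of_mem α (Set.mem_toFinset.mpr hiK)) hiT
end

section
/- Let W ⊆ F be a B-linear subspace of dimension s over B, where F has degree t over B. Then the set of roots of the evaluation map x ↦ L_W(x) = ∏_{α∈W}(x − α) is exactly W, and the image {L_W(x) : x ∈ F} is a B-linear subspace of F of dimension t − s over B. -/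
/-!
Translation by an element of `W` permutes `W`, so `L_W(x + y) = L_W(x)` for `y ∈ W`. Hence the
polynomial `L_W(X + y) - L_W(X)`, of degree less than `|W|`, is constant on `W` and therefore
constant, which makes `L_W` additive. Reindexing by `a ↦ c a` gives `L_W(c x) = c^{|W|} L_W(x)`,
and `c^{|W|} = c` for `c ∈ B` since `|W|` is a power of `|B|`. So `L_W` is a `B`-linear
endomorphism of `F` with kernel `W`, and rank–nullity gives the dimension of its image.
-/

open Polynomial

namespace AddSubgroup

variable {F : Type*} [Field F] (G : AddSubgroup F) [Fintype G]

noncomputable def subspacePoly : F[X] := Lagrange.nodal Finset.univ ((↑) : G → F)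

theorem eval_subspacePoly (x : F) : G.subspacePoly.eval x = ∏ a : G, (x - a) :=
  Lagrange.eval_nodal

theorem isMonicOfDegree_subspacePoly : IsMonicOfDegree G.subspacePoly (Fintype.card G) :=
  ⟨Lagrange.natDegree_nodal, Lagrange.nodal_monic⟩

theorem eval_subspacePoly_eq_zero_iff {x : F} : G.subspacePoly.eval x = 0 ↔ x ∈ G := by
  simp [eval_subspacePoly, Finset.prod_eq_zero_iff, sub_eq_zero]

theorem eval_subspacePoly_add_of_mem (x : F) {y : F} (hy : y ∈ G) :
    G.subspacePoly.eval (x + y) = G.subspacePoly.eval x := by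
  simp only [eval_subspacePoly]
  refine (Fintype.prod_equiv (Equiv.addRight ⟨y, hy⟩) _ _ fun a => ?_).symm
  simp

/-- `L(X + y) - L(X)` has degree below `|G|` and takes the constant value `L(y)` on `G`,
so it is that constant. -/
theorem eval_subspacePoly_add (x y : F) :
    G.subspacePoly.eval (x + y) = G.subspacePoly.eval x + G.subspacePoly.eval y := by
  set L := G.subspacePoly
  have hL := G.isMonicOfDegree_subspacePoly
  have hcard : Fintype.card G ≠ 0 := Fintype.card_ne_zero
  have hshift : taylor y L - L = C (L.eval y) := by
    refine eq_of_natDegree_lt_card_of_eval_eq _ _ (Subtype.val_injective (p := (· ∈ G)))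
      (fun a => ?_) ?_
    · simp [taylor_eval, add_comm (a : F), G.eval_subspacePoly_add_of_mem y a.2,
        G.eval_subspacePoly_eq_zero_iff.2 a.2, L]
    · refine max_lt (IsMonicOfDegree.natDegree_sub_lt hcard ?_ hL) (by simpa using hcard.bot_lt)
      exact ⟨by rw [natDegree_taylor, hL.natDegree_eq], by simpa [Monic] using hL.monic⟩
  simpa [taylor_eval, sub_eq_iff_eq_add'] using congrArg (eval x) hshift

theorem eval_subspacePoly_mul {d : F} (hd : d ≠ 0) (hdG : ∀ a ∈ G, d * a ∈ G) (x : F) :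
    G.subspacePoly.eval (d * x) = d ^ Fintype.card G * G.subspacePoly.eval x := by
  let mulLeft : G → G := fun a => ⟨d * a, hdG a a.2⟩
  have hmulLeft : mulLeft.Bijective := Finite.injective_iff_bijective.1 fun a b hab =>
    Subtype.ext (mul_left_cancel₀ hd (congrArg Subtype.val hab))
  calc G.subspacePoly.eval (d * x) = ∏ a : G, (d * x - d * a) := by
        rw [eval_subspacePoly]
        exact (Fintype.prod_bijective mulLeft hmulLeft _ _ fun _ => rfl).symm
    _ = d ^ Fintype.card G * G.subspacePoly.eval x := by
        simp [eval_subspacePoly, ← mul_sub, Finset.prod_mul_distrib]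

end AddSubgroup

namespace Submodule

variable {B F : Type*} [Field B] [Fintype B] [Field F] [Algebra B F] (W : Submodule B F)
  [Fintype W]

theorem eval_subspacePoly_smul (c : B) (x : F) :
    W.toAddSubgroup.subspacePoly.eval (c • x) = c • W.toAddSubgroup.subspacePoly.eval x := by
  rcases eq_or_ne c 0 with rfl | hc
  · simp [AddSubgroup.eval_subspacePoly_eq_zero_iff]
  have hcard : Fintype.card W.toAddSubgroup = Fintype.card B ^ Module.finrank B W :=
    Module.card_eq_pow_finrank (K := B) (V := W)
  simp only [Algebra.smul_def]
  rw [AddSubgroup.eval_subspacePoly_mul _ ((_root_.map_ne_zero _).2 hc)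
    (fun a ha => by simpa [Algebra.smul_def] using W.smul_mem c ha), hcard, ← map_pow,
    FiniteField.pow_card_pow]

noncomputable def subspacePolyLinearMap : F →ₗ[B] F where
  toFun := W.toAddSubgroup.subspacePoly.eval
  map_add' := W.toAddSubgroup.eval_subspacePoly_add
  map_smul' := W.eval_subspacePoly_smul

theorem subspacePolyLinearMap_apply (x : F) :
    W.subspacePolyLinearMap x = ∏ a : W, (x - a) :=
  W.toAddSubgroup.eval_subspacePoly x

theorem ker_subspacePolyLinearMap : LinearMap.ker W.subspacePolyLinearMap = W :=
  ext fun _ => W.toAddSubgroup.eval_subspacePoly_eq_zero_iff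

end Submodule

/-- For a `B`-linear subspace `W ⊆ F` of dimension `s` over `B`,
where `F` has degree `t` over `B`, the set of roots of the evaluation map
`x ↦ L_W(x) = ∏_{α ∈ W}(x - α)` is exactly `W`, and the image `{L_W(x) : x ∈ F}` is a
`B`-linear subspace of `F` of dimension `t - s` over `B`. -/
theorem subspace_polynomial_kernel_image
    {B F : Type*} [Field B] [Field F] [Fintype B] [Fintype F] [Algebra B F]
    {s t : ℕ} (ht : Module.finrank B F = t)
    (W : Submodule B F) (hW : Module.finrank B W = s) :
    {x : F | (∏ a ∈ (Set.toFinite (W : Set F)).toFinset, (x - a)) = 0} = (W : Set F) ∧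
    ∃ V : Submodule B F,
      (V : Set F) =
        Set.range (fun x : F => ∏ a ∈ (Set.toFinite (W : Set F)).toFinset, (x - a)) ∧
      Module.finrank B V = t - s := by
  classical
  have hL (x : F) : ∏ a ∈ (Set.toFinite (W : Set F)).toFinset, (x - a) =
      W.subspacePolyLinearMap x := by
    rw [W.subspacePolyLinearMap_apply]
    exact Finset.prod_subtype _ (fun _ => Set.Finite.mem_toFinset _) _
  simp_rw [hL]
  refine ⟨congrArg SetLike.coe W.ker_subspacePolyLinearMap,
    LinearMap.range W.subspacePolyLinearMap, LinearMap.coe_range _, ?_⟩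
  have := W.subspacePolyLinearMap.finrank_range_add_finrank_ker
  rw [W.ker_subspacePolyLinearMap] at this
  omega
end
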